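/- The sequence (a_m)_{m∈ℕ}, where a_m := inf_{h∈(0,1)} f_{m+1}(h)/f_m(h), is increasing: a_m ≤ a_{m+1} for every m ∈ ℕ. -/

import Mathlib

/-!
Both maps `h ↦ h²` and `h ↦ 1 - (1 - h)²` send `(0,1)` into itself, so the recursion writes
`f_{m+2}(h) / f_{m+1}(h)` as the mediant of the ratios `f_{m+1}/f_m` at these two points; a mediant
of two ratios that are both at least `a_m` is itself at least `a_m`.
-/

/-- The polynomials `f_n : [0,1] → ℝ` defined by `f_0(h) = h(1-h)` and
`f_n(h) = (f_{n-1}(h^2) + f_{n-1}(1-(1-h)^2))/2`. -/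
noncomputable def f : ℕ → ℝ → ℝ
  | 0, h => h * (1 - h)
  | n + 1, h => (f n (h ^ 2) + f n (1 - (1 - h) ^ 2)) / 2

/-- `a_m := inf_{h ∈ (0,1)} f_{m+1}(h) / f_m(h)`. -/
noncomputable def a (m : ℕ) : ℝ :=
  sInf ((fun h => f (m + 1) h / f m h) '' Set.Ioo (0 : ℝ) 1)

open Set

lemma le_add_div_add_of_le_div {α : Type*} [Field α] [LinearOrder α] [IsStrictOrderedRing α]
    {c p₁ p₂ q₁ q₂ : α} (hq₁ : 0 < q₁) (hq₂ : 0 < q₂)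
    (h₁ : c ≤ p₁ / q₁) (h₂ : c ≤ p₂ / q₂) : c ≤ (p₁ + p₂) / (q₁ + q₂) := by
  rw [le_div_iff₀ hq₁] at h₁
  rw [le_div_iff₀ hq₂] at h₂
  rw [le_div_iff₀ (add_pos hq₁ hq₂), mul_add]
  exact add_le_add h₁ h₂

lemma sq_mem_Ioo {h : ℝ} (hh : h ∈ Ioo (0 : ℝ) 1) : h ^ 2 ∈ Ioo (0 : ℝ) 1 :=
  ⟨pow_pos hh.1 2, pow_lt_one₀ hh.1.le hh.2 two_ne_zero⟩

lemma one_sub_one_sub_sq_mem_Ioo {h : ℝ} (hh : h ∈ Ioo (0 : ℝ) 1) :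
    1 - (1 - h) ^ 2 ∈ Ioo (0 : ℝ) 1 := by
  have : 1 - h ∈ Ioo (0 : ℝ) 1 := ⟨sub_pos.2 hh.2, sub_lt_self 1 hh.1⟩
  obtain ⟨h₀, h₁⟩ := sq_mem_Ioo this
  exact ⟨sub_pos.2 h₁, sub_lt_self 1 h₀⟩

lemma f_pos (n : ℕ) {h : ℝ} (hh : h ∈ Ioo (0 : ℝ) 1) : 0 < f n h := by
  induction n generalizing h with
  | zero => exact mul_pos hh.1 (sub_pos.2 hh.2)
  | succ n ih => exact half_pos (add_pos (ih (sq_mem_Ioo hh)) (ih (one_sub_one_sub_sq_mem_Ioo hh)))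

lemma f_succ_div_f_eq (m : ℕ) (h : ℝ) :
    f (m + 1 + 1) h / f (m + 1) h =
      (f (m + 1) (h ^ 2) + f (m + 1) (1 - (1 - h) ^ 2)) /
        (f m (h ^ 2) + f m (1 - (1 - h) ^ 2)) :=
  div_div_div_cancel_right₀ two_ne_zero _ _

lemma a_le_f_succ_div_f (m : ℕ) {h : ℝ} (hh : h ∈ Ioo (0 : ℝ) 1) :
    a m ≤ f (m + 1) h / f m h := by
  refine csInf_le ⟨0, ?_⟩ (mem_image_of_mem _ hh)
  rintro _ ⟨x, hx, rfl⟩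
  exact (div_pos (f_pos _ hx) (f_pos _ hx)).le

/-- The sequence `(a_m)` is increasing: `a_m ≤ a_{m+1}` for every `m`. -/
theorem a_increasing (m : ℕ) : a m ≤ a (m + 1) := by
  refine le_csInf ((nonempty_Ioo.2 one_pos).image _) ?_
  rintro _ ⟨h, hh, rfl⟩
  have hsq := sq_mem_Ioo hh
  have hrefl := one_sub_one_sub_sq_mem_Ioo hh
  dsimp only
  rw [f_succ_div_f_eq]
  exact le_add_div_add_of_le_div (f_pos m hsq) (f_pos m hrefl)
    (a_le_f_succ_div_f m hsq) (a_le_f_succ_div_f m hrefl)
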